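/- Let Ω ⊂ ℝ^d be a bounded convex open set containing a ball of radius r > 0, let x ∈ closure(Ω) and 0 < ρ ≤ r. Then the closure of Ω ∩ B^∞(x, ρ) satisfies an interior cone condition with height c_θ ρ and angle θ' = 2 arcsin(c_θ / (4√d)), where θ = 2 arcsin(r / (2 diam Ω)) and c_θ = sin θ / (1 + sin θ). -/

import Mathlib

/-! The closure `K` of `Ω ∩ B^∞(x, ρ)` is convex. Shrinking the ball `B(z, r) ⊆ Ω` towards
`x ∈ closure Ω` by the factor `t = ρ / (r + diam Ω)` gives a ball `B(p, t r)` inside `Ω ∩ B(x, ρ)`,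
so inside `K`, and `t r ≥ c_θ ρ` because `sin θ ≤ r / diam Ω`. Every `w ∈ K` lies within
`2 √d ρ` of `p`, and the convex hull of `w` and `B(p, t r)` contains the cone with apex `w`,
axis pointing at `p`, height `t r` and half-opening `2 arcsin u` as soon as `u ≤ 1/2` and
`2 u ‖p - w‖ ≤ t r`. -/

open Metric Set

/-- The cone with apex `x`, direction `ξ`, height `r` and opening angle `θ`. -/
noncomputable def cone {d : ℕ} (x ξ : EuclideanSpace ℝ (Fin d)) (r θ : ℝ) :
    Set (EuclideanSpace ℝ (Fin d)) :=
  {z | ∃ (y : EuclideanSpace ℝ (Fin d)) (lam : ℝ), ‖y‖ = 1 ∧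
    Real.cos θ ≤ (inner ℝ y ξ : ℝ) ∧ lam ∈ Set.Icc 0 r ∧ z = x + lam • y}

def cubeInfty {d : ℕ} (x : EuclideanSpace ℝ (Fin d)) (ρ : ℝ) :
    Set (EuclideanSpace ℝ (Fin d)) :=
  {z | ∀ i, |z i - x i| < ρ}

section Cube

variable {d : ℕ}

theorem ball_subset_cubeInfty (x : EuclideanSpace ℝ (Fin d)) (ρ : ℝ) :
    ball x ρ ⊆ cubeInfty x ρ := fun v hv i =>
  calc |v i - x i| = ‖(v - x) i‖ := rfl
    _ ≤ ‖v - x‖ := PiLp.norm_apply_le _ i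
    _ < ρ := mem_ball_iff_norm.mp hv

theorem cubeInfty_subset_closedBall (x : EuclideanSpace ℝ (Fin d)) {ρ : ℝ} (hρ : 0 ≤ ρ) :
    cubeInfty x ρ ⊆ closedBall x (√d * ρ) := by
  intro v hv
  rw [mem_closedBall_iff_norm, EuclideanSpace.norm_eq]
  calc √(∑ i, ‖(v - x) i‖ ^ 2) ≤ √(∑ _i : Fin d, ρ ^ 2) :=
        Real.sqrt_le_sqrt <| Finset.sum_le_sum fun i _ =>
          pow_le_pow_left₀ (norm_nonneg _) (hv i).le 2
    _ = √d * ρ := by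
        rw [Finset.sum_const, Finset.card_univ, Fintype.card_fin, nsmul_eq_mul,
          Real.sqrt_mul (Nat.cast_nonneg d), Real.sqrt_sq hρ]

theorem closure_cubeInfty_subset_closedBall (x : EuclideanSpace ℝ (Fin d)) {ρ : ℝ} (hρ : 0 ≤ ρ) :
    closure (cubeInfty x ρ) ⊆ closedBall x (√d * ρ) :=
  closure_minimal (cubeInfty_subset_closedBall x hρ) isClosed_closedBall

theorem dist_le_of_mem_closure_cubeInfty {x p w : EuclideanSpace ℝ (Fin d)} {ρ : ℝ} (hd : 0 < d)
    (hp : p ∈ ball x ρ) (hw : w ∈ closure (cubeInfty x ρ)) : dist p w ≤ 2 * √d * ρ := by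
  have hρ : 0 < ρ := pos_of_mem_ball hp
  have hd1 : 1 ≤ √(d : ℝ) := Real.one_le_sqrt.mpr (by exact_mod_cast hd)
  have hwx : dist w x ≤ √d * ρ := closure_cubeInfty_subset_closedBall x hρ.le hw
  linarith [dist_triangle_right p w x, mem_ball.mp hp, le_mul_of_one_le_left hρ.le hd1]

theorem convex_cubeInfty (x : EuclideanSpace ℝ (Fin d)) (ρ : ℝ) : Convex ℝ (cubeInfty x ρ) := by
  have : cubeInfty x ρ = ⋂ i, (EuclideanSpace.proj i : EuclideanSpace ℝ (Fin d) →L[ℝ] ℝ) ⁻¹'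
      ball (x i) ρ := by
    ext v
    simp [cubeInfty, Real.dist_eq]
  rw [this]
  exact convex_iInter fun i => (convex_ball (x i) ρ).linear_preimage _

end Cube

section Convex

variable {E : Type*} [NormedAddCommGroup E] [NormedSpace ℝ E]

theorem Convex.ball_add_smul_sub_subset {s : Set E} (hs : Convex ℝ s) {x z : E} {r t : ℝ}
    (hx : x ∈ closure s) (hz : ball z r ⊆ s) (ht : t ∈ Ioc (0 : ℝ) 1) :
    ball (x + t • (z - x)) (t * r) ⊆ s := by
  intro v hv
  have ht0 : t ≠ 0 := ht.1.ne'
  set y := z + t⁻¹ • (v - (x + t • (z - x)))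
  have hy : y ∈ interior s := by
    refine interior_maximal hz isOpen_ball ?_
    rw [mem_ball_iff_norm, add_sub_cancel_left, norm_smul, Real.norm_eq_abs,
      abs_of_pos (inv_pos.mpr ht.1), inv_mul_lt_iff₀ ht.1]
    exact mem_ball_iff_norm.mp hv
  have hyx : y - x = t⁻¹ • (v - x) := by
    simp only [y, smul_sub, smul_add, smul_smul, inv_mul_cancel₀ ht0, one_smul]
    abel
  have hv : v = x + t • (y - x) := by
    rw [hyx, smul_inv_smul₀ ht0, add_sub_cancel]
  exact hv ▸ interior_subset (hs.add_smul_sub_mem_interior' hx hy ht)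

theorem Convex.ball_subset_inter_ball {s : Set E} (hs : Convex ℝ s) (hsb : Bornology.IsBounded s)
    {x z : E} {r ρ : ℝ} (hx : x ∈ closure s) (hz : ball z r ⊆ s) (hr : 0 < r) (hρ : 0 < ρ)
    (hρr : ρ ≤ r) :
    ball (x + (ρ / (r + diam s)) • (z - x)) (ρ / (r + diam s) * r) ⊆ s ∩ ball x ρ := by
  have hrD : 0 < r + diam s := add_pos_of_pos_of_nonneg hr diam_nonneg
  set t := ρ / (r + diam s)
  have ht : t ∈ Ioc (0 : ℝ) 1 :=
    ⟨by positivity, div_le_one_of_le₀ (by linarith [diam_nonneg (s := s)]) hrD.le⟩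
  refine subset_inter (hs.ball_add_smul_sub_subset hx hz ht) (ball_subset_ball' ?_)
  have hzx : dist z x ≤ diam s :=
    (dist_le_diam_of_mem hsb.closure (subset_closure (hz (mem_ball_self hr))) hx).trans_eq
      (diam_closure s)
  rw [dist_eq_norm, add_sub_cancel_left, norm_smul, Real.norm_eq_abs, abs_of_pos ht.1,
    ← dist_eq_norm]
  calc t * r + t * dist z x ≤ t * (r + diam s) := by rw [mul_add]; gcongr
    _ = ρ := div_mul_cancel₀ ρ hrD.ne'

end Convex

section InnerProduct

variable {E : Type*} [NormedAddCommGroup E] [InnerProductSpace ℝ E]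

theorem Convex.add_smul_mem_of_closedBall_subset {K : Set E} (hK : Convex ℝ K) {w ξ y : E}
    {L η δ lam : ℝ} (hw : w ∈ K) (hball : closedBall (w + L • ξ) η ⊆ K) (hξ : ‖ξ‖ = 1)
    (hy : ‖y‖ = 1) (hL : 0 ≤ L) (hyξ : ‖y - ξ‖ ≤ δ) (hδ : δ ≤ 1) (hLδ : L * δ ≤ η)
    (hlam0 : 0 ≤ lam) (hlam : lam ≤ η) : w + lam • y ∈ K := by
  rcases le_total lam L with hlamL | hLlam
  · -- `w + lam • y` is on the segment from `w` to `w + L • y`, which is `δ L`-close to `w + L • ξ`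
    rcases hL.eq_or_lt with rfl | hL0
    · simpa [le_antisymm hlamL hlam0] using hw
    have hv : w + L • y ∈ K := hball <| by
      rw [mem_closedBall_iff_norm, add_sub_add_left_eq_sub, ← smul_sub, norm_smul,
        Real.norm_eq_abs, abs_of_nonneg hL]
      exact (mul_le_mul_of_nonneg_left hyξ hL).trans hLδ
    have hμ : lam / L ∈ Icc (0 : ℝ) 1 := ⟨div_nonneg hlam0 hL, div_le_one_of_le₀ hlamL hL⟩
    simpa [smul_smul, div_mul_cancel₀ lam hL0.ne'] using hK.add_smul_sub_mem hw hv hμ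
  · -- `⟪y, ξ⟫ ≥ 1/2`, so `‖lam • y - L • ξ‖² ≤ lam² - lam L + L² ≤ lam²`
    refine hball (mem_closedBall_iff_norm.mpr ?_)
    have hinner : 1 / 2 ≤ inner ℝ y ξ := by
      have h := norm_sub_sq_real y ξ
      rw [hy, hξ] at h
      nlinarith [norm_nonneg (y - ξ)]
    have hsq : ‖lam • y - L • ξ‖ ^ 2 ≤ lam ^ 2 := by
      rw [norm_sub_sq_real, norm_smul, norm_smul, real_inner_smul_left, real_inner_smul_right,
        hy, hξ, Real.norm_eq_abs, Real.norm_eq_abs, abs_of_nonneg hlam0, abs_of_nonneg hL]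
      nlinarith [mul_nonneg hlam0 hL]
    rw [add_sub_add_left_eq_sub]
    exact (pow_le_pow_iff_left₀ (norm_nonneg _) hlam0 two_ne_zero).mp hsq |>.trans hlam

theorem norm_sub_le_of_cos_two_arcsin_le_inner {y ξ : E} (hy : ‖y‖ = 1) (hξ : ‖ξ‖ = 1) {u : ℝ}
    (hu0 : 0 ≤ u) (hu1 : u ≤ 1) (h : Real.cos (2 * Real.arcsin u) ≤ inner ℝ y ξ) :
    ‖y - ξ‖ ≤ 2 * u := by
  have hcos : Real.cos (2 * Real.arcsin u) = 1 - 2 * u ^ 2 := by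
    rw [Real.cos_two_mul, Real.cos_arcsin, Real.sq_sqrt (by nlinarith)]
    ring
  have hsq : ‖y - ξ‖ ^ 2 ≤ (2 * u) ^ 2 := by
    rw [norm_sub_sq_real, hy, hξ]
    linarith
  exact (pow_le_pow_iff_left₀ (norm_nonneg _) (by positivity) two_ne_zero).mp hsq

theorem exists_norm_eq_one_and_eq_norm_smul [Nontrivial E] (v : E) :
    ∃ ξ : E, ‖ξ‖ = 1 ∧ v = ‖v‖ • ξ := by
  rcases eq_or_ne v 0 with rfl | hv
  · obtain ⟨ξ, hξ⟩ := exists_norm_eq E zero_le_one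
    exact ⟨ξ, hξ, by simp⟩
  · exact ⟨‖v‖⁻¹ • v, norm_smul_inv_norm hv, (smul_inv_smul₀ (norm_ne_zero_iff.mpr hv) v).symm⟩

end InnerProduct

theorem exists_cone_subset_of_convex {d : ℕ} (hd : 0 < d) {K : Set (EuclideanSpace ℝ (Fin d))}
    (hK : Convex ℝ K) {w p : EuclideanSpace ℝ (Fin d)} {η h u : ℝ} (hw : w ∈ K)
    (hball : closedBall p η ⊆ K) (hu0 : 0 ≤ u) (hu : u ≤ 1 / 2) (hpw : 2 * u * ‖p - w‖ ≤ η)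
    (hh : h ≤ η) : ∃ ξ, ‖ξ‖ = 1 ∧ cone w ξ h (2 * Real.arcsin u) ⊆ K := by
  have : Nonempty (Fin d) := ⟨⟨0, hd⟩⟩
  obtain ⟨ξ, hξ, hpξ⟩ := exists_norm_eq_one_and_eq_norm_smul (p - w)
  rw [← add_sub_cancel w p, hpξ] at hball
  refine ⟨ξ, hξ, ?_⟩
  rintro _ ⟨y, lam, hy, hyξ, ⟨hlam0, hlam⟩, rfl⟩
  exact hK.add_smul_mem_of_closedBall_subset hw hball hξ hy (norm_nonneg _)
    (norm_sub_le_of_cos_two_arcsin_le_inner hy hξ hu0 (by linarith) hyξ) (by linarith)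
    (by linarith) hlam0 (hlam.trans hh)

theorem sin_two_arcsin_div_one_add_sin_le {r D : ℝ} (hr : 0 < r) (hD : 2 * r ≤ D) :
    0 ≤ Real.sin (2 * Real.arcsin (r / (2 * D))) / (1 + Real.sin (2 * Real.arcsin (r / (2 * D)))) ∧
      Real.sin (2 * Real.arcsin (r / (2 * D))) / (1 + Real.sin (2 * Real.arcsin (r / (2 * D)))) ≤
        r / (r + D) := by
  have hD0 : 0 < D := by linarith
  set s := r / (2 * D)
  have hs0 : 0 ≤ s := by positivity
  have hs1 : s ≤ 1 := div_le_one_of_le₀ (by linarith) (by linarith)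
  have hsin : Real.sin (2 * Real.arcsin s) = 2 * s * √(1 - s ^ 2) := by
    rw [Real.sin_two_mul, Real.sin_arcsin (by linarith) hs1, Real.cos_arcsin]
  have hsqrt : √(1 - s ^ 2) ≤ 1 := Real.sqrt_le_one.mpr (by nlinarith)
  have hσ0 : 0 ≤ Real.sin (2 * Real.arcsin s) := by rw [hsin]; positivity
  have hσ : Real.sin (2 * Real.arcsin s) ≤ 2 * s := by
    rw [hsin]; nlinarith [Real.sqrt_nonneg (1 - s ^ 2)]
  have hrD : r / (r + D) = 2 * s / (1 + 2 * s) := by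
    simp only [s]; field_simp; ring
  refine ⟨by positivity, ?_⟩
  rw [hrD, div_le_div_iff₀ (by positivity) (by positivity)]
  nlinarith

theorem local_coneCondition_of_convex_general {d : ℕ} (hd : 0 < d)
    (Ω : Set (EuclideanSpace ℝ (Fin d))) (hΩb : Bornology.IsBounded Ω)
    (hΩc : Convex ℝ Ω)
    (z : EuclideanSpace ℝ (Fin d)) (r : ℝ) (hr : 0 < r) (hball : ball z r ⊆ Ω)
    (x : EuclideanSpace ℝ (Fin d)) (hx : x ∈ closure Ω) (ρ : ℝ) (hρ : 0 < ρ)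
    (hρr : ρ ≤ r) :
    ∀ w ∈ closure (Ω ∩ cubeInfty x ρ),
      ∃ ξ : EuclideanSpace ℝ (Fin d), ‖ξ‖ = 1 ∧
        cone w ξ
          (Real.sin (2 * Real.arcsin (r / (2 * Metric.diam Ω))) /
            (1 + Real.sin (2 * Real.arcsin (r / (2 * Metric.diam Ω)))) * ρ)
          (2 * Real.arcsin
            (Real.sin (2 * Real.arcsin (r / (2 * Metric.diam Ω))) /
              (1 + Real.sin (2 * Real.arcsin (r / (2 * Metric.diam Ω)))) /
              (4 * Real.sqrt d)))
          ⊆ closure (Ω ∩ cubeInfty x ρ) := by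
  intro w hw
  -- makes the space nontrivial, so that `diam (ball z r) = 2 r`
  have : Nonempty (Fin d) := ⟨⟨0, hd⟩⟩
  set D := diam Ω
  have hD : 2 * r ≤ D := (diam_ball_eq z hr.le).symm.le.trans (diam_mono hball hΩb)
  set t := ρ / (r + D)
  set p := x + t • (z - x)
  have hη : 0 < t * r := mul_pos (div_pos hρ (by linarith)) hr
  have hpΩ := hΩc.ball_subset_inter_ball hΩb hx hball hr hρ hρr
  have hpK : closedBall p (t * r) ⊆ closure (Ω ∩ cubeInfty x ρ) := by
    rw [← closure_ball p hη.ne']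
    exact closure_mono (hpΩ.trans (inter_subset_inter_right _ (ball_subset_cubeInfty x ρ)))
  have hpw : ‖p - w‖ ≤ 2 * √d * ρ := by
    rw [← dist_eq_norm]
    exact dist_le_of_mem_closure_cubeInfty hd (hpΩ (mem_ball_self hη)).2
      (closure_mono inter_subset_right hw)
  obtain ⟨hc0, hcr⟩ := sin_two_arcsin_div_one_add_sin_le hr hD
  set c := Real.sin (2 * Real.arcsin (r / (2 * D))) / (1 + Real.sin (2 * Real.arcsin (r / (2 * D))))
  have hct : c * ρ ≤ t * r :=
    (mul_le_mul_of_nonneg_right hcr hρ.le).trans_eq (div_mul_comm r (r + D) ρ)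
  have hd1 : 1 ≤ √(d : ℝ) := Real.one_le_sqrt.mpr (by exact_mod_cast hd)
  refine exists_cone_subset_of_convex hd (hΩc.inter (convex_cubeInfty x ρ)).closure hw hpK
    (by positivity) ?_ ?_ hct
  · rw [div_le_iff₀ (by positivity)]
    linarith [hcr.trans (div_le_one_of_le₀ (by linarith) (by linarith))]
  · calc 2 * (c / (4 * √d)) * ‖p - w‖ ≤ 2 * (c / (4 * √d)) * (2 * √d * ρ) := by gcongr
      _ = c * ρ := by field_simp; ring
      _ ≤ t * r := hct

/-- Local interior cone condition for a bounded convex domain: the closure of the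
intersection of `Ω` with any cube `B^∞(x, ρ)` (with `x ∈ closure Ω`, `0 < ρ ≤ r`)
satisfies an interior cone condition with height `c_θ ρ` and angle
`θ' = 2 arcsin(c_θ / (4√d))`, where `θ = 2 arcsin(r / (2 diam Ω))` and
`c_θ = sin θ / (1 + sin θ)`. -/
theorem local_coneCondition_of_convex {d : ℕ} (hd : 0 < d)
    (Ω : Set (EuclideanSpace ℝ (Fin d))) (hΩb : Bornology.IsBounded Ω)
    (hΩc : Convex ℝ Ω) (hΩo : IsOpen Ω)
    (z : EuclideanSpace ℝ (Fin d)) (r : ℝ) (hr : 0 < r) (hball : ball z r ⊆ Ω)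
    (x : EuclideanSpace ℝ (Fin d)) (hx : x ∈ closure Ω) (ρ : ℝ) (hρ : 0 < ρ)
    (hρr : ρ ≤ r) :
    ∀ w ∈ closure (Ω ∩ cubeInfty x ρ),
      ∃ ξ : EuclideanSpace ℝ (Fin d), ‖ξ‖ = 1 ∧
        cone w ξ
          (Real.sin (2 * Real.arcsin (r / (2 * Metric.diam Ω))) /
            (1 + Real.sin (2 * Real.arcsin (r / (2 * Metric.diam Ω)))) * ρ)
          (2 * Real.arcsin
            (Real.sin (2 * Real.arcsin (r / (2 * Metric.diam Ω))) /
              (1 + Real.sin (2 * Real.arcsin (r / (2 * Metric.diam Ω)))) /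
              (4 * Real.sqrt d)))
          ⊆ closure (Ω ∩ cubeInfty x ρ) :=
  local_coneCondition_of_convex_general hd Ω hΩb hΩc z r hr hball x hx ρ hρ hρr
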